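/- Let (G,(A_e)_{e∈E}) be an edge-uncertainty graph with true weights w_e ∈ A_e and query costs q_e > 0, whose underlying graph G is a cactus graph with simple cycles C_1,…,C_k. For each i, let I_i be the edge-uncertainty instance whose graph is the cycle C_i with the same uncertainty sets, weights and query costs, and let OPT_i be the minimum query cost of a feasible query set for I_i. Then the minimum query cost of a feasible query set for G equals OPT_1 + ⋯ + OPT_k, and the disjoint union of optimal query sets of the instances I_1,…,I_k is an optimal query set for G. -/

import Mathlib

open scoped Classical

variable {V : Type*}

noncomputable def treeWeight (T : SimpleGraph V) (w : Sym2 V → ℝ) : ℝ :=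
  ∑ᶠ e ∈ T.edgeSet, w e

/-- A spanning forest of a (not necessarily connected) graph `H`: an acyclic subgraph
with the same reachability relation as `H`.  For connected `H` this is exactly a
spanning tree of `H`. -/
def IsSpanningForest (H T : SimpleGraph V) : Prop :=
  T ≤ H ∧ T.IsAcyclic ∧ ∀ u v : V, H.Reachable u v ↔ T.Reachable u v

/-- A minimum-weight spanning forest. -/
def IsMSF (H : SimpleGraph V) (w : Sym2 V → ℝ) (T : SimpleGraph V) : Prop :=
  IsSpanningForest H T ∧
    ∀ T' : SimpleGraph V, IsSpanningForest H T' → treeWeight T w ≤ treeWeight T' w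

def IsUncertaintySet (S : Set ℝ) : Prop :=
  S.Nonempty ∧ BddBelow S ∧ BddAbove S ∧
    ((∃ x, S = {x}) ∨ (sInf S ∉ S ∧ sSup S ∉ S))

def Admissible (H : SimpleGraph V) (A : Sym2 V → Set ℝ) (w : Sym2 V → ℝ)
    (Q : Set (Sym2 V)) (w' : Sym2 V → ℝ) : Prop :=
  (∀ e ∈ Q, w' e = w e) ∧ ∀ e ∈ H.edgeSet, e ∉ Q → w' e ∈ A e

/-- `Q` is a feasible query set for the instance with graph `H`: some spanning forest is
a minimum spanning forest with respect to every admissible weight function. -/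
def FeasibleQuerySet (H : SimpleGraph V) (A : Sym2 V → Set ℝ) (w : Sym2 V → ℝ)
    (Q : Set (Sym2 V)) : Prop :=
  ∃ T : SimpleGraph V, ∀ w' : Sym2 V → ℝ, Admissible H A w Q w' → IsMSF H w' T

/-- The query cost of a (finite) query set. -/
def queryCost (q : Sym2 V → ℝ) (Q : Finset (Sym2 V)) : ℝ := ∑ e ∈ Q, q e

/-- `Q` is an optimal query set for the instance with graph `H`: a feasible query set
consisting of edges of `H` with minimum query cost. -/
def OptimalQuerySet (H : SimpleGraph V) (A : Sym2 V → Set ℝ) (w : Sym2 V → ℝ)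
    (q : Sym2 V → ℝ) (Q : Finset (Sym2 V)) : Prop :=
  ↑Q ⊆ H.edgeSet ∧ FeasibleQuerySet H A w ↑Q ∧
    ∀ Q' : Finset (Sym2 V), ↑Q' ⊆ H.edgeSet → FeasibleQuerySet H A w ↑Q' →
      queryCost q Q ≤ queryCost q Q'

/-- `G` is a cactus graph: connected, and any two simple cycles sharing an edge have the
same edge set (every edge lies on at most one simple cycle). -/
def IsCactus (G : SimpleGraph V) : Prop :=
  G.Connected ∧ ∀ (u v : V) (c₁ : G.Walk u u) (c₂ : G.Walk v v),
    c₁.IsCycle → c₂.IsCycle → (∃ e : Sym2 V, e ∈ c₁.edges ∧ e ∈ c₂.edges) →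
      ∀ e : Sym2 V, e ∈ c₁.edges ↔ e ∈ c₂.edges


namespace Stmt9Aux
open SimpleGraph

lemma edges_mapLe {G G' : SimpleGraph V} (h : G ≤ G') {u v : V} (p : G.Walk u v) :
    (p.mapLe h).edges = p.edges := by
  have hid : ⇑(SimpleGraph.Hom.ofLE h) = id := funext fun _ => rfl
  simp [Walk.mapLe, Walk.edges_map, hid, Sym2.map_id]

lemma cycle_edges_nonempty {G : SimpleGraph V} {v : V} {p : G.Walk v v} (hp : p.IsCycle) :
    ∃ e, e ∈ p.edges := by
  have h3 := hp.three_le_length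
  have : p.edges ≠ [] := by
    intro h
    have := p.length_edges
    rw [h] at this
    simp at this
    omega
  exact List.exists_mem_of_ne_nil _ this

/-- fundamental cycle through a non-tree edge -/
lemma fund {K T : SimpleGraph V} (hT : IsSpanningForest K T) {x y : V}
    (hadj : K.Adj x y) (he : s(x, y) ∉ T.edgeSet) :
    ∃ p : K.Walk x x, p.IsCycle ∧ s(x, y) ∈ p.edges ∧
      ∀ f ∈ p.edges, f ≠ s(x, y) → f ∈ T.edgeSet := by
  obtain ⟨hle, hacyc, hreach⟩ := hT
  obtain ⟨p0⟩ := (hreach y x).mp hadj.symm.reachable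
  set pp : T.Path y x := p0.toPath with hpp
  have hppE : ∀ f ∈ (pp : T.Walk y x).edges, f ∈ T.edgeSet :=
    fun f hf => (pp : T.Walk y x).edges_subset_edgeSet hf
  let q : K.Walk y x := (pp : T.Walk y x).mapLe hle
  have hqE : q.edges = (pp : T.Walk y x).edges := edges_mapLe hle _
  have hqP : q.IsPath := pp.2.mapLe hle
  have hnot : s(x, y) ∉ q.edges := by
    rw [hqE]; intro h; exact he (hppE _ h)
  refine ⟨Walk.cons hadj q, SimpleGraph.Path.cons_isCycle ⟨q, hqP⟩ hadj hnot, ?_, ?_⟩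
  · simp
  · intro f hf hne
    simp only [Walk.edges_cons, List.mem_cons] at hf
    rcases hf with hf | hf
    · exact absurd hf hne
    · rw [hqE] at hf; exact hppE _ hf

lemma reach_delete {K : SimpleGraph V} {S : Set (Sym2 V)}
    (h : ∀ x y : V, K.Adj x y → s(x, y) ∈ S → (K.deleteEdges S).Reachable x y) :
    ∀ u v : V, K.Reachable u v ↔ (K.deleteEdges S).Reachable u v := by
  intro u v
  constructor
  · rintro ⟨p⟩
    induction p with
    | nil => exact Reachable.refl _
    | @cons a b w' hadj p ih =>
      refine Reachable.trans ?_ ih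
      by_cases hS : s(a, b) ∈ S
      · exact h _ _ hadj hS
      · exact (SimpleGraph.Adj.reachable (by rw [deleteEdges_adj]; exact ⟨hadj, hS⟩))
  · exact fun hr => hr.mono (deleteEdges_le S)

end Stmt9Aux

namespace Stmt9Aux
open SimpleGraph

section Cactus

variable {G : SimpleGraph V} {k : ℕ} {b : Fin k → V} {c : ∀ i : Fin k, G.Walk (b i) (b i)}

lemma cEdges_subset (i : Fin k) : {e | e ∈ (c i).edges} ⊆ G.edgeSet :=
  fun _ he => (c i).edges_subset_edgeSet he

lemma Hi_le (i : Fin k) : SimpleGraph.fromEdgeSet {e | e ∈ (c i).edges} ≤ G := by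
  intro v w h
  rw [SimpleGraph.fromEdgeSet_adj] at h
  exact (c i).adj_of_mem_edges h.1

lemma edgeSet_Hi (i : Fin k) :
    (SimpleGraph.fromEdgeSet {e | e ∈ (c i).edges}).edgeSet = {e | e ∈ (c i).edges} := by
  rw [SimpleGraph.edgeSet_fromEdgeSet]
  ext e
  simp only [Set.mem_diff, Set.mem_setOf_eq, and_iff_left_iff_imp]
  exact fun he hdiag => (G.not_isDiag_of_mem_edgeSet (cEdges_subset i he)) hdiag

variable (hcactus : IsCactus G) (hcyc : ∀ i, (c i).IsCycle)
  (hdistinct : ∀ i j : Fin k, i ≠ j → ¬ ∀ e : Sym2 V, e ∈ (c i).edges ↔ e ∈ (c j).edges)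
  (hall : ∀ (v : V) (C : G.Walk v v), C.IsCycle →
      ∃ i : Fin k, ∀ e : Sym2 V, e ∈ C.edges ↔ e ∈ (c i).edges)

include hcactus hcyc hdistinct in
lemma cyc_disjoint {i j : Fin k} (hij : i ≠ j) {e : Sym2 V}
    (h1 : e ∈ (c i).edges) (h2 : e ∈ (c j).edges) : False :=
  hdistinct i j hij (hcactus.2 _ _ _ _ (hcyc i) (hcyc j) ⟨e, h1, h2⟩)

include hall in
lemma cycle_eq {K : SimpleGraph V} (hK : K ≤ G) {v : V} {p : K.Walk v v} (hp : p.IsCycle) :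
    ∃ i, ∀ e, e ∈ p.edges ↔ e ∈ (c i).edges := by
  obtain ⟨i, hi⟩ := hall v (p.mapLe hK) ((SimpleGraph.Walk.mapLe_isCycle hK).mpr hp)
  exact ⟨i, fun e => by rw [← hi e, edges_mapLe]⟩

include hcactus hcyc hall in
lemma cycle_in_Hi {i : Fin k} {K : SimpleGraph V}
    (hK : K ≤ SimpleGraph.fromEdgeSet {e | e ∈ (c i).edges}) {v : V} {p : K.Walk v v}
    (hp : p.IsCycle) : ∀ e, e ∈ p.edges ↔ e ∈ (c i).edges := by
  obtain ⟨j, hj⟩ := cycle_eq hall (hK.trans (Hi_le i)) hp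
  obtain ⟨e0, he0⟩ := cycle_edges_nonempty hp
  have he0i : e0 ∈ (c i).edges := by
    have h1 : e0 ∈ K.edgeSet := p.edges_subset_edgeSet he0
    have h2 := SimpleGraph.edgeSet_mono hK h1
    rwa [edgeSet_Hi] at h2
  have := hcactus.2 _ _ _ _ (hcyc j) (hcyc i) ⟨e0, (hj e0).mp he0, he0i⟩
  exact fun e => (hj e).trans (this e)

include hcyc in
lemma detour {i : Fin k} {x y : V} (hxy : s(x, y) ∈ (c i).edges) :
    ((SimpleGraph.fromEdgeSet {e | e ∈ (c i).edges}).deleteEdges {s(x, y)}).Reachable x y := by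
  have hs : ∀ e ∈ (c i).edges,
      e ∈ (SimpleGraph.fromEdgeSet {e | e ∈ (c i).edges}).edgeSet := by
    rw [edgeSet_Hi]; exact fun e he => he
  have h := (SimpleGraph.adj_and_reachable_delete_edges_iff_exists_cycle
      (G := SimpleGraph.fromEdgeSet {e | e ∈ (c i).edges}) (v := x) (w := y)).mpr
    ⟨b i, (c i).transfer _ hs, (hcyc i).transfer hs, by
      rw [SimpleGraph.Walk.edges_transfer]; exact hxy⟩
  exact h.2

end Cactus

end Stmt9Aux

namespace Stmt9Aux
open SimpleGraph

section Structure

variable {G : SimpleGraph V} {k : ℕ} {b : Fin k → V} {c : ∀ i : Fin k, G.Walk (b i) (b i)}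
  (hcactus : IsCactus G) (hcyc : ∀ i, (c i).IsCycle)
  (hdistinct : ∀ i j : Fin k, i ≠ j → ¬ ∀ e : Sym2 V, e ∈ (c i).edges ↔ e ∈ (c j).edges)
  (hall : ∀ (v : V) (C : G.Walk v v), C.IsCycle →
      ∃ i : Fin k, ∀ e : Sym2 V, e ∈ C.edges ↔ e ∈ (c i).edges)

include hcyc in
/-- every cycle has at least one edge missing from an acyclic subgraph -/
lemma exists_missing {T : SimpleGraph V} (hacyc : T.IsAcyclic) (i : Fin k) :
    ∃ e ∈ (c i).edges, e ∉ T.edgeSet := by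
  by_contra h
  push_neg at h
  exact hacyc ((c i).transfer T h) ((hcyc i).transfer h)

include hcyc hall in
/-- structure of spanning forests of the cactus: exactly one edge missing per cycle -/
lemma sf_structure {T : SimpleGraph V} (hT : IsSpanningForest G T) :
    ∃ f : Fin k → Sym2 V, (∀ i, f i ∈ (c i).edges) ∧
      T.edgeSet = G.edgeSet \ Set.range f := by
  have hch : ∀ i : Fin k, ∃ e, e ∈ (c i).edges ∧ e ∉ T.edgeSet := by
    intro i; obtain ⟨e, h1, h2⟩ := exists_missing hcyc hT.2.1 i; exact ⟨e, h1, h2⟩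
  choose f hf1 hf2 using hch
  refine ⟨f, hf1, ?_⟩
  ext e
  simp only [Set.mem_diff, Set.mem_range]
  constructor
  · intro he
    refine ⟨SimpleGraph.edgeSet_mono hT.1 he, ?_⟩
    rintro ⟨i, rfl⟩
    exact hf2 i he
  · rintro ⟨heG, hnr⟩
    by_contra heT
    induction e with
    | h x y =>
      obtain ⟨p, hp, hmem, hrest⟩ := fund hT ((G.mem_edgeSet).mp heG) heT
      obtain ⟨i, hi⟩ := cycle_eq hall le_rfl hp
      have : f i ∈ T.edgeSet := by
        apply hrest _ ((hi (f i)).mpr (hf1 i))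
        intro hfe
        exact hnr ⟨i, hfe⟩
      exact hf2 i this

include hcactus hcyc hall in
/-- structure of spanning forests of a single cycle instance -/
lemma sf_Hi_structure {i : Fin k} {T : SimpleGraph V}
    (hT : IsSpanningForest (SimpleGraph.fromEdgeSet {e | e ∈ (c i).edges}) T) :
    ∃ e ∈ (c i).edges, T.edgeSet = {f | f ∈ (c i).edges} \ {e} := by
  obtain ⟨e, he, heT⟩ : ∃ e, e ∈ (c i).edges ∧ e ∉ T.edgeSet := by
    obtain ⟨e, h1, h2⟩ := exists_missing hcyc hT.2.1 i; exact ⟨e, h1, h2⟩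
  refine ⟨e, he, ?_⟩
  ext g
  simp only [Set.mem_diff, Set.mem_setOf_eq, Set.mem_singleton_iff]
  constructor
  · intro hg
    have h1 := SimpleGraph.edgeSet_mono hT.1 hg
    rw [edgeSet_Hi] at h1
    exact ⟨h1, fun h => heT (h ▸ hg)⟩
  · rintro ⟨hg, hne⟩
    by_contra hgT
    induction g with
    | h x y =>
      have hadj : (SimpleGraph.fromEdgeSet {e | e ∈ (c i).edges}).Adj x y := by
        rw [← SimpleGraph.mem_edgeSet, edgeSet_Hi]; exact hg
      obtain ⟨p, hp, hmem, hrest⟩ := fund hT hadj hgT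
      have hpe := cycle_in_Hi hcactus hcyc hall le_rfl hp
      have : e ∈ T.edgeSet := by
        apply hrest _ ((hpe e).mpr he)
        rintro rfl
        exact hne rfl
      exact heT this

include hcactus hcyc hdistinct hall in
/-- deleting one edge per cycle yields a spanning forest of the cactus -/
lemma sf_delete {f : Fin k → Sym2 V} (hf : ∀ i, f i ∈ (c i).edges) :
    IsSpanningForest G (G.deleteEdges (Set.range f)) := by
  refine ⟨SimpleGraph.deleteEdges_le _, ?_, ?_⟩
  · intro v p hp
    obtain ⟨i, hi⟩ := cycle_eq hall (SimpleGraph.deleteEdges_le _) hp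
    have hfi : f i ∈ p.edges := (hi (f i)).mpr (hf i)
    have := p.edges_subset_edgeSet hfi
    rw [SimpleGraph.edgeSet_deleteEdges] at this
    exact this.2 ⟨i, rfl⟩
  · apply reach_delete
    intro x y hadj hS
    obtain ⟨i, hi⟩ := hS
    have hix : s(x, y) ∈ (c i).edges := hi ▸ hf i
    have hr := detour hcyc hix
    refine hr.mono ?_
    intro a bb hab
    rw [SimpleGraph.deleteEdges_adj] at hab ⊢
    refine ⟨Hi_le i hab.1, ?_⟩
    rintro ⟨j, hj⟩
    by_cases hij : i = j
    · subst hij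
      exact hab.2 (by rw [← hj, hi]; rfl)
    · have habc : s(a, bb) ∈ (c i).edges := by
        have h1 : s(a, bb) ∈ (SimpleGraph.fromEdgeSet {e | e ∈ (c i).edges}).edgeSet :=
          (SimpleGraph.fromEdgeSet {e | e ∈ (c i).edges}).mem_edgeSet.mpr hab.1
        rwa [edgeSet_Hi] at h1
      exact cyc_disjoint hcactus hcyc hdistinct (Ne.symm hij) (hj ▸ hf j) habc

include hcactus hcyc hall in
/-- deleting one edge from a cycle instance yields a spanning forest -/
lemma sf_Hi_delete {i : Fin k} {e : Sym2 V} (he : e ∈ (c i).edges) :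
    IsSpanningForest (SimpleGraph.fromEdgeSet {e | e ∈ (c i).edges})
      ((SimpleGraph.fromEdgeSet {e | e ∈ (c i).edges}).deleteEdges {e}) := by
  refine ⟨SimpleGraph.deleteEdges_le _, ?_, ?_⟩
  · intro v p hp
    have hpe := cycle_in_Hi hcactus hcyc hall (SimpleGraph.deleteEdges_le _) hp
    have hmem : e ∈ p.edges := (hpe e).mpr he
    have := p.edges_subset_edgeSet hmem
    rw [SimpleGraph.edgeSet_deleteEdges] at this
    exact this.2 rfl
  · apply reach_delete
    intro x y hadj hS
    rw [Set.mem_singleton_iff] at hS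
    subst hS
    exact detour hcyc he

end Structure

end Stmt9Aux

namespace Stmt9Aux
open SimpleGraph

set_option linter.unusedSectionVars false

section Weights

variable [Fintype V] {G : SimpleGraph V} {k : ℕ} {b : Fin k → V}
  {c : ∀ i : Fin k, G.Walk (b i) (b i)}
  (hcactus : IsCactus G) (hcyc : ∀ i, (c i).IsCycle)
  (hdistinct : ∀ i j : Fin k, i ≠ j → ¬ ∀ e : Sym2 V, e ∈ (c i).edges ↔ e ∈ (c j).edges)
  (hall : ∀ (v : V) (C : G.Walk v v), C.IsCycle →
      ∃ i : Fin k, ∀ e : Sym2 V, e ∈ C.edges ↔ e ∈ (c i).edges)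

lemma treeWeight_congr {T T' : SimpleGraph V} (h : T.edgeSet = T'.edgeSet) (w : Sym2 V → ℝ) :
    treeWeight T w = treeWeight T' w := by
  rw [treeWeight, treeWeight, h]

lemma treeWeight_delete {K : SimpleGraph V} {S : Set (Sym2 V)} (hS : S ⊆ K.edgeSet)
    (w : Sym2 V → ℝ) :
    treeWeight (K.deleteEdges S) w = treeWeight K w - ∑ᶠ e ∈ S, w e := by
  have hfin1 : (K.edgeSet \ S).Finite := Set.toFinite _
  have hfin2 : S.Finite := Set.toFinite _
  have hdisj : Disjoint (K.edgeSet \ S) S := Set.disjoint_sdiff_left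
  have hunion : K.edgeSet \ S ∪ S = K.edgeSet := Set.diff_union_of_subset hS
  have h := finsum_mem_union (f := w) hdisj hfin1 hfin2
  rw [hunion] at h
  rw [treeWeight, treeWeight, SimpleGraph.edgeSet_deleteEdges, h]
  ring

include hcactus hcyc hdistinct in
lemma inj_of_mem {f : Fin k → Sym2 V} (hf : ∀ i, f i ∈ (c i).edges) :
    Function.Injective f := by
  intro i j hij
  by_contra hne
  exact cyc_disjoint hcactus hcyc hdistinct hne (hf i) (hij ▸ hf j)

lemma finsum_range' {k : ℕ} {f : Fin k → Sym2 V} (hinj : Function.Injective f)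
    (w : Sym2 V → ℝ) : ∑ᶠ e ∈ Set.range f, w e = ∑ i : Fin k, w (f i) := by
  rw [finsum_mem_range hinj, finsum_eq_sum_of_fintype]

lemma singleton_subset_Hi {i : Fin k} {e : Sym2 V} (he : e ∈ (c i).edges) :
    {e} ⊆ (SimpleGraph.fromEdgeSet {e | e ∈ (c i).edges}).edgeSet := by
  rw [edgeSet_Hi]; exact Set.singleton_subset_iff.mpr he

include hcactus hcyc hall in
/-- an MSF of the cycle instance has its missing edge of maximum weight -/
lemma max_of_msf {i : Fin k} {w' : Sym2 V → ℝ} {T : SimpleGraph V} {e : Sym2 V}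
    (he : e ∈ (c i).edges)
    (hmsf : IsMSF (SimpleGraph.fromEdgeSet {e | e ∈ (c i).edges}) w' T)
    (hTe : T.edgeSet = {f | f ∈ (c i).edges} \ {e}) :
    ∀ g ∈ (c i).edges, w' g ≤ w' e := by
  intro g hg
  have h1 : treeWeight T w' =
      treeWeight ((SimpleGraph.fromEdgeSet {e | e ∈ (c i).edges}).deleteEdges {e}) w' :=
    treeWeight_congr (by rw [hTe, SimpleGraph.edgeSet_deleteEdges, edgeSet_Hi]) _
  have h2 := hmsf.2 _ (sf_Hi_delete hcactus hcyc hall hg)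
  rw [h1, treeWeight_delete (singleton_subset_Hi he),
    treeWeight_delete (singleton_subset_Hi hg), finsum_mem_singleton,
    finsum_mem_singleton] at h2
  linarith

include hcactus hcyc hall in
/-- deleting a maximum-weight edge of the cycle gives an MSF of the cycle instance -/
lemma msf_Hi {i : Fin k} {w' : Sym2 V → ℝ} {e : Sym2 V} (he : e ∈ (c i).edges)
    (hmax : ∀ g ∈ (c i).edges, w' g ≤ w' e) :
    IsMSF (SimpleGraph.fromEdgeSet {e | e ∈ (c i).edges}) w'
      ((SimpleGraph.fromEdgeSet {e | e ∈ (c i).edges}).deleteEdges {e}) := by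
  refine ⟨sf_Hi_delete hcactus hcyc hall he, ?_⟩
  intro T' hT'
  obtain ⟨g, hg, hT'e⟩ := sf_Hi_structure hcactus hcyc hall hT'
  have h1 : treeWeight T' w' =
      treeWeight ((SimpleGraph.fromEdgeSet {e | e ∈ (c i).edges}).deleteEdges {g}) w' :=
    treeWeight_congr (by rw [hT'e, SimpleGraph.edgeSet_deleteEdges, edgeSet_Hi]) _
  rw [h1, treeWeight_delete (singleton_subset_Hi he),
    treeWeight_delete (singleton_subset_Hi hg), finsum_mem_singleton, finsum_mem_singleton]
  have := hmax g hg
  linarith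

lemma range_subset_edgeSet {f : Fin k → Sym2 V} (hf : ∀ i, f i ∈ (c i).edges) :
    Set.range f ⊆ G.edgeSet := by
  rintro e ⟨i, rfl⟩
  exact cEdges_subset i (hf i)

include hcactus hcyc hdistinct hall in
/-- deleting per-cycle maxima gives an MSF of the cactus -/
lemma msf_G {ef : Fin k → Sym2 V} (hef : ∀ i, ef i ∈ (c i).edges) {w' : Sym2 V → ℝ}
    (hmax : ∀ i, ∀ g ∈ (c i).edges, w' g ≤ w' (ef i)) :
    IsMSF G w' (G.deleteEdges (Set.range ef)) := by
  refine ⟨sf_delete hcactus hcyc hdistinct hall hef, ?_⟩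
  intro T' hT'
  obtain ⟨g, hg1, hg2⟩ := sf_structure hcyc hall hT'
  have h1 : treeWeight T' w' = treeWeight (G.deleteEdges (Set.range g)) w' :=
    treeWeight_congr (by rw [hg2, SimpleGraph.edgeSet_deleteEdges]) _
  rw [h1, treeWeight_delete (range_subset_edgeSet hef), treeWeight_delete
    (range_subset_edgeSet hg1), finsum_range' (inj_of_mem hcactus hcyc hdistinct hef),
    finsum_range' (inj_of_mem hcactus hcyc hdistinct hg1)]
  have hsum : ∑ i : Fin k, w' (g i) ≤ ∑ i : Fin k, w' (ef i) :=
    Finset.sum_le_sum (fun i _ => hmax i _ (hg1 i))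
  linarith

include hcactus hcyc hdistinct hall in
/-- conversely, any MSF of the cactus has per-cycle maxima as missing edges -/
lemma max_of_msf_G {ef : Fin k → Sym2 V} (hef : ∀ i, ef i ∈ (c i).edges)
    {w' : Sym2 V → ℝ} {T : SimpleGraph V} (hmsf : IsMSF G w' T)
    (hTe : T.edgeSet = G.edgeSet \ Set.range ef) (i : Fin k) :
    ∀ g ∈ (c i).edges, w' g ≤ w' (ef i) := by
  intro g hg
  set g' := Function.update ef i g with hg'def
  have hg' : ∀ j, g' j ∈ (c j).edges := by
    intro j
    by_cases h : j = i
    · subst h; simp only [hg'def, Function.update_self]; exact hg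
    · simp only [hg'def, Function.update_of_ne h]; exact hef j
  have h2 := hmsf.2 _ (sf_delete hcactus hcyc hdistinct hall hg')
  have h1 : treeWeight T w' = treeWeight (G.deleteEdges (Set.range ef)) w' :=
    treeWeight_congr (by rw [hTe, SimpleGraph.edgeSet_deleteEdges]) _
  rw [h1, treeWeight_delete (range_subset_edgeSet hef), treeWeight_delete
    (range_subset_edgeSet hg'), finsum_range' (inj_of_mem hcactus hcyc hdistinct hef),
    finsum_range' (inj_of_mem hcactus hcyc hdistinct hg')] at h2
  -- h2 : twG - ∑ ef ≤ twG - ∑ g'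
  have hsg' : ∑ j : Fin k, w' (g' j) = w' g + ∑ j ∈ Finset.univ \ {i}, w' (ef j) := by
    have hcomp : (fun j => w' (g' j)) = Function.update (fun j => w' (ef j)) i (w' g) := by
      funext j
      by_cases h : j = i
      · subst h; simp [hg'def]
      · simp [hg'def, Function.update_of_ne h]
    rw [hcomp, Finset.sum_update_of_mem (Finset.mem_univ i)]
  have hsef : ∑ j : Fin k, w' (ef j) = w' (ef i) + ∑ j ∈ Finset.univ \ {i}, w' (ef j) := by
    rw [← Finset.sum_update_of_mem (Finset.mem_univ i)]
    congr 1
    funext j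
    by_cases h : j = i
    · subst h; simp
    · simp [Function.update_of_ne h]
  rw [hsg', hsef] at h2
  linarith

end Weights

end Stmt9Aux

open Stmt9Aux in
/-- Let `G` be a cactus whose simple cycles (up to edge set) are
`C_1, …, C_k`, and for each `i` let `I_i` be the instance whose graph consists of the
edges of `C_i` (same uncertainty sets, weights and query costs).  If `Qᵢ i` is an optimal
query set for `I_i` for each `i`, and `Q` is an optimal query set for `G`, then the cost
of `Q` equals the sum of the costs of the `Qᵢ i`, and the `Qᵢ i` are pairwise disjoint
and their (disjoint) union is an optimal query set for `G`. -/
theorem stmt9 {V : Type*} [Fintype V] (G : SimpleGraph V) (A : Sym2 V → Set ℝ)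
    (w : Sym2 V → ℝ) (q : Sym2 V → ℝ)
    (hconn : G.Connected)
    (hA : ∀ e ∈ G.edgeSet, IsUncertaintySet (A e))
    (hw : ∀ e ∈ G.edgeSet, w e ∈ A e)
    (hq : ∀ e ∈ G.edgeSet, 0 < q e)
    (hcactus : IsCactus G)
    -- the simple cycles of `G`, enumerated without repetition:
    (k : ℕ) (b : Fin k → V) (c : ∀ i : Fin k, G.Walk (b i) (b i))
    (hcyc : ∀ i, (c i).IsCycle)
    (hdistinct : ∀ i j : Fin k, i ≠ j → ¬ ∀ e : Sym2 V, e ∈ (c i).edges ↔ e ∈ (c j).edges)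
    (hall : ∀ (v : V) (C : G.Walk v v), C.IsCycle →
      ∃ i : Fin k, ∀ e : Sym2 V, e ∈ C.edges ↔ e ∈ (c i).edges)
    -- optimal query sets for the cycle instances:
    (Qi : Fin k → Finset (Sym2 V))
    (hQi : ∀ i, OptimalQuerySet (SimpleGraph.fromEdgeSet {e | e ∈ (c i).edges}) A w q (Qi i))
    -- an optimal query set for `G`:
    (Q : Finset (Sym2 V)) (hQ : OptimalQuerySet G A w q Q) :
    queryCost q Q = ∑ i : Fin k, queryCost q (Qi i) ∧
    (∀ i j : Fin k, i ≠ j → Disjoint (Qi i) (Qi j)) ∧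
    OptimalQuerySet G A w q (Finset.univ.biUnion Qi) := by
  -- notation
  set U : Finset (Sym2 V) := Finset.univ.biUnion Qi with hU
  -- membership in Qi implies membership in cycle edges
  have hQie : ∀ i, ∀ e ∈ Qi i, e ∈ (c i).edges := by
    intro i e he
    have := (hQi i).1 (Finset.mem_coe.mpr he)
    rwa [edgeSet_Hi] at this
  -- pairwise disjointness of the Qi
  have hdisjQi : ∀ i j : Fin k, i ≠ j → Disjoint (Qi i) (Qi j) := by
    intro i j hij
    rw [Finset.disjoint_left]
    intro e hei hej
    exact cyc_disjoint hcactus hcyc hdistinct hij (hQie i e hei) (hQie j e hej)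
  -- U is a subset of the edges of G
  have hUsub : ↑U ⊆ G.edgeSet := by
    intro e he
    rw [Finset.coe_biUnion] at he
    simp only [Finset.coe_univ, Set.mem_iUnion, Finset.mem_coe, Set.mem_univ, true_implies,
      exists_const] at he
    obtain ⟨i, hi⟩ := he
    exact cEdges_subset i (hQie i e hi)
  -- w itself is admissible for any subinstance
  have hadmw : ∀ (H : SimpleGraph V), H ≤ G → ∀ (Q0 : Set (Sym2 V)), Admissible H A w Q0 w :=
    fun H hH Q0 => ⟨fun _ _ => rfl, fun e he _ => hw e (SimpleGraph.edgeSet_mono hH he)⟩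
  -- extract per-cycle witnesses: a max edge which remains max for all admissible weights
  have hwit : ∀ i : Fin k, ∃ e, e ∈ (c i).edges ∧
      ∀ w' : Sym2 V → ℝ, Admissible (SimpleGraph.fromEdgeSet {e | e ∈ (c i).edges}) A w
        (↑(Qi i)) w' → ∀ g ∈ (c i).edges, w' g ≤ w' e := by
    intro i
    obtain ⟨T, hT⟩ := (hQi i).2.1
    have hsf := (hT w (hadmw _ (Hi_le i) _)).1.1
    obtain ⟨e, he, hTe⟩ := sf_Hi_structure hcactus hcyc hall (hT w (hadmw _ (Hi_le i) _)).1
    exact ⟨e, he, fun w' hadm => max_of_msf hcactus hcyc hall he (hT w' hadm) hTe⟩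
  choose ei hei hmaxi using hwit
  -- Feasibility of U for G
  have hfeasU : FeasibleQuerySet G A w ↑U := by
    refine ⟨G.deleteEdges (Set.range ei), fun w' hadm => ?_⟩
    refine msf_G hcactus hcyc hdistinct hall hei (fun i => hmaxi i w' ?_)
    constructor
    · intro e he
      refine hadm.1 e ?_
      rw [Finset.mem_coe] at he ⊢
      exact Finset.mem_biUnion.mpr ⟨i, Finset.mem_univ i, he⟩
    · intro e he heQ
      rw [edgeSet_Hi] at he
      by_cases heU : e ∈ (↑U : Set (Sym2 V))
      · rw [hadm.1 e heU]
        exact hw e (cEdges_subset i he)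
      · exact hadm.2 e (cEdges_subset i he) heU
  -- the G-witness forest and its missing edges
  obtain ⟨TG, hTG⟩ := hQ.2.1
  obtain ⟨eg, hegmem, hTGe⟩ :=
    sf_structure hcyc hall (hTG w (hadmw G le_rfl _)).1
  -- Feasibility of Q ∩ (cycle i) for the cycle instance
  have hfeasQc : ∀ i : Fin k, FeasibleQuerySet
      (SimpleGraph.fromEdgeSet {e | e ∈ (c i).edges}) A w
      ↑(Q.filter (fun e => e ∈ (c i).edges)) := by
    intro i
    refine ⟨(SimpleGraph.fromEdgeSet {e | e ∈ (c i).edges}).deleteEdges {eg i},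
      fun w'' hadm'' => ?_⟩
    set w' : Sym2 V → ℝ := fun x => if x ∈ (c i).edges then w'' x else w x with hw'def
    have hadm' : Admissible G A w ↑Q w' := by
      constructor
      · intro e he
        by_cases hec : e ∈ (c i).edges
        · have : e ∈ Q.filter (fun e => e ∈ (c i).edges) := by
            rw [Finset.mem_filter]
            exact ⟨Finset.mem_coe.mp he, hec⟩
          simp only [hw'def, if_pos hec]
          exact hadm''.1 e (Finset.mem_coe.mpr this)
        · simp only [hw'def, if_neg hec]
      · intro e heG heQ
        by_cases hec : e ∈ (c i).edges
        · simp only [hw'def, if_pos hec]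
          refine hadm''.2 e (by rw [edgeSet_Hi]; exact hec) ?_
          intro hmem
          rw [Finset.mem_coe, Finset.mem_filter] at hmem
          exact heQ (Finset.mem_coe.mpr hmem.1)
        · simp only [hw'def, if_neg hec]
          exact hw e heG
    have hmsfG := hTG w' hadm'
    have hmax := max_of_msf_G hcactus hcyc hdistinct hall hegmem hmsfG hTGe i
    have hmax'' : ∀ g ∈ (c i).edges, w'' g ≤ w'' (eg i) := by
      intro g hg
      have := hmax g hg
      simpa only [hw'def, if_pos hg, if_pos (hegmem i)] using this
    exact msf_Hi hcactus hcyc hall (hegmem i) hmax''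
  -- cost of U
  have hcostU : queryCost q U = ∑ i : Fin k, queryCost q (Qi i) := by
    rw [hU, queryCost, Finset.sum_biUnion]
    · rfl
    · intro i _ j _ hij
      exact hdisjQi i j hij
  -- chain of inequalities
  have h1 : queryCost q Q ≤ queryCost q U := hQ.2.2 U hUsub hfeasU
  have h2 : ∀ i, queryCost q (Qi i) ≤ queryCost q (Q.filter (fun e => e ∈ (c i).edges)) := by
    intro i
    refine (hQi i).2.2 _ ?_ (hfeasQc i)
    intro e he
    rw [Finset.mem_coe, Finset.mem_filter] at he
    rw [edgeSet_Hi]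
    exact he.2
  have h3 : ∑ i : Fin k, queryCost q (Q.filter (fun e => e ∈ (c i).edges)) ≤ queryCost q Q := by
    have hdisjQc : ∀ i ∈ Finset.univ, ∀ j ∈ (Finset.univ : Finset (Fin k)), i ≠ j →
        Disjoint (Q.filter (fun e => e ∈ (c i).edges)) (Q.filter (fun e => e ∈ (c j).edges)) := by
      intro i _ j _ hij
      rw [Finset.disjoint_left]
      intro e hei hej
      rw [Finset.mem_filter] at hei hej
      exact cyc_disjoint hcactus hcyc hdistinct hij hei.2 hej.2
    calc ∑ i : Fin k, queryCost q (Q.filter (fun e => e ∈ (c i).edges))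
        = queryCost q (Finset.univ.biUnion (fun i => Q.filter (fun e => e ∈ (c i).edges))) := by
          rw [queryCost, Finset.sum_biUnion hdisjQc]; rfl
      _ ≤ queryCost q Q := by
          apply Finset.sum_le_sum_of_subset_of_nonneg
          · intro e he
            rw [Finset.mem_biUnion] at he
            obtain ⟨i, _, hei⟩ := he
            exact (Finset.mem_filter.mp hei).1
          · intro e heQ _
            exact (hq e (hQ.1 (Finset.mem_coe.mpr heQ))).le
  have h4 : ∑ i : Fin k, queryCost q (Qi i) ≤
      ∑ i : Fin k, queryCost q (Q.filter (fun e => e ∈ (c i).edges)) :=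
    Finset.sum_le_sum (fun i _ => h2 i)
  have hEq : queryCost q Q = ∑ i : Fin k, queryCost q (Qi i) := by
    rw [hcostU] at h1
    linarith
  refine ⟨hEq, hdisjQi, hUsub, hfeasU, ?_⟩
  intro Q' hQ'sub hQ'feas
  calc queryCost q U = queryCost q Q := by rw [hcostU, hEq]
    _ ≤ queryCost q Q' := hQ.2.2 Q' hQ'sub hQ'feas
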